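/- arXiv:1203.1203 — 6 statements merged into one kernel-verified Lean document; each statement's English description precedes it below -/
import Mathlib

section
/- Let w be a word over the two-letter alphabet {a,b}. The following conditions are equivalent: (1) w is trapezoidal; (2) |w| = L_w + H_w; (3) |w| = R_w + K_w; (4) for every n ≥ 0, w has at most one left special factor of length n; (5) for every n ≥ 0, w has at most one right special factor of length n; (6) for every n ≥ 0, |f_w(n+1) − f_w(n)| ≤ 1, where f_w(n) denotes the number of distinct factors of w of length n. -/
open List

/-- Words over the two-letter alphabet {a,b}, encoded as lists of booleans
(`false` = a, `true` = b). -/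
abbrev Word := List Bool

/-- The set of factors of `w` of length `n`. -/
def factorSet (w : Word) (n : ℕ) : Set Word :=
  {u | u.length = n ∧ u <:+: w}

/-- `w` is trapezoidal if it has at most `n+1` distinct factors of length `n`, for all `n`. -/
def Trapezoidal (w : Word) : Prop :=
  ∀ n : ℕ, (factorSet w n).ncard ≤ n + 1

/-- `u` is a right special factor of `w`. -/
def RightSpecial (w u : Word) : Prop :=
  (u ++ [false]) <:+: w ∧ (u ++ [true]) <:+: w

/-- `u` is a left special factor of `w`. -/
def LeftSpecial (w u : Word) : Prop :=
  (false :: u) <:+: w ∧ (true :: u) <:+: w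

/-- The number of occurrences of `u` as a factor of `w` (counted by starting position). -/
noncomputable def occ (u w : Word) : ℕ :=
  {i : ℕ | i + u.length ≤ w.length ∧ (w.drop i).take u.length = u}.ncard

/-- `H_w`: the minimal length of a prefix of `w` occurring exactly once in `w`. -/
noncomputable def Hp (w : Word) : ℕ := sInf {n | n ≤ w.length ∧ occ (w.take n) w = 1}

/-- `K_w`: the minimal length of a suffix of `w` occurring exactly once in `w`. -/
noncomputable def Kp (w : Word) : ℕ := sInf {n | n ≤ w.length ∧ occ (w.drop (w.length - n)) w = 1}

/-- `R_w`: the minimal `n` such that `w` has no right special factor of length `n`. -/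
noncomputable def Rp (w : Word) : ℕ := sInf {n | ∀ u : Word, u.length = n → ¬ RightSpecial w u}

/-- `L_w`: the minimal `n` such that `w` has no left special factor of length `n`. -/
noncomputable def Lp (w : Word) : ℕ := sInf {n | ∀ u : Word, u.length = n → ¬ LeftSpecial w u}

/-- A word is closed if it is empty or has a factor, different from the word itself,
occurring exactly twice, as a prefix and as a suffix. -/
def ClosedWord (w : Word) : Prop :=
  w = [] ∨ ∃ u : Word, u ≠ w ∧ u <+: w ∧ u <:+ w ∧ occ u w = 2

/-- A binary word is balanced if any two factors of the same length have the same number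
of occurrences of each letter, up to one. -/
def BalancedWord (w : Word) : Prop :=
  ∀ u v : Word, u <:+: w → v <:+: w → u.length = v.length →
    ∀ c : Bool, ((u.count c : ℤ) - (v.count c : ℤ)).natAbs ≤ 1

/-- `(f,g)` is a pathological pair of `w`. -/
def PathPair (w f g : Word) : Prop :=
  f <:+: w ∧ g <:+: w ∧ f.length = g.length ∧
    2 ≤ ((f.count false : ℤ) - (g.count false : ℤ)).natAbs

/-- `p` is a period of `u`: `1 ≤ p ≤ |u|` and `u_i = u_{i+p}` whenever both sides are defined. -/
def HasPeriod (u : Word) (p : ℕ) : Prop :=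
  1 ≤ p ∧ p ≤ u.length ∧ ∀ i : ℕ, i + p < u.length → u[i]? = u[i + p]?

/-- A word is central if it is empty or has two coprime periods `p`, `q`
with length `p + q - 2`. -/
def Central (u : Word) : Prop :=
  u = [] ∨ ∃ p q : ℕ, Nat.Coprime p q ∧ _root_.HasPeriod u p ∧ _root_.HasPeriod u q ∧ u.length + 2 = p + q

/-!
Write `f n` for the number of factors of length `n` and `s n` for the number of right special
ones. A factor of length `n` has one or two right extensions, two exactly when it is right
special, and only the suffix of length `n` can have none, which happens exactly when `n ≥ K_w`.
Hence `f (n + 1) - f n = s n - [K_w ≤ n ≤ |w|]`, and telescoping up to `|w| + 1` gives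
`∑ s n = |w| - K_w`. Suffixes of right special factors are right special, so `s n ≥ 1` exactly
for `n < R_w`: thus `R_w + K_w ≤ |w|`, with equality iff `s n ≤ 1` for all `n`, in which case `f`
moves by at most one at each step and `w` is trapezoidal. Reversal swaps left and right, `H_w`
and `K_w`, `L_w` and `R_w`.

Conversely, in a trapezoidal word two right special factors of length `n < K_w` would push
`f (n + 1)` above `n + 2`; dually, two left special factors of length `m` force `H_w ≤ m`.
Induct on `w = a w'`: if `w` has two right special factors of length `n`, one of them, `x`, is
not right special in `w'`, so some `x c` occurs in `w` only as a prefix, while `x` itself occurs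
twice; hence `n < H_w`. But the longest common suffix of the two factors yields two left special
factors of length at most `n`, a contradiction.
-/

section Occurrences

variable {w u : Word}

lemma occ_eq_ncard_splits (u w : Word) :
    occ u w = {p : Word × Word | p.1 ++ u ++ p.2 = w}.ncard := by
  have hpos : {i | i + u.length ≤ w.length ∧ (w.drop i).take u.length = u} =
      (fun p : Word × Word => p.1.length) '' {p | p.1 ++ u ++ p.2 = w} := by
    ext i
    constructor
    · rintro ⟨hi, hu⟩
      have hw : w.take i ++ u ++ w.drop (i + u.length) = w := by
        conv_rhs => rw [← List.take_append_drop i w,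
          ← List.take_append_drop u.length (w.drop i), hu, List.drop_drop]
        rw [List.append_assoc]
      exact ⟨(w.take i, w.drop (i + u.length)), hw, by simp; omega⟩
    · rintro ⟨⟨s, t⟩, rfl, rfl⟩
      simp
  rw [occ, hpos, Set.InjOn.ncard_image]
  rintro ⟨s, t⟩ h ⟨s', t'⟩ h' hs
  simp only [Set.mem_ofPred_eq, List.append_assoc] at h h' hs
  obtain ⟨rfl, h''⟩ := List.append_inj (h.trans h'.symm) hs
  rw [List.append_cancel_left h'']

lemma occ_reverse (u w : Word) : occ u.reverse w.reverse = occ u w := by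
  have hsplits : {p : Word × Word | p.1 ++ u.reverse ++ p.2 = w.reverse} =
      (fun p : Word × Word => (p.2.reverse, p.1.reverse)) '' {p | p.1 ++ u ++ p.2 = w} := by
    ext ⟨s, t⟩
    constructor
    · intro h
      refine ⟨(t.reverse, s.reverse), ?_, by simp⟩
      simpa [List.append_assoc] using congrArg List.reverse h
    · rintro ⟨⟨s', t'⟩, rfl, h⟩
      simp only [Prod.mk.injEq] at h
      obtain ⟨rfl, rfl⟩ := h
      simp [List.append_assoc]
  rw [occ_eq_ncard_splits, occ_eq_ncard_splits, hsplits, Set.ncard_image_of_injective]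
  rintro ⟨s, t⟩ ⟨s', t'⟩ h
  simp_all

lemma occ_eq_one_iff_of_suffix (hu : u <:+ w) : occ u w = 1 ↔ ∀ c, ¬ u ++ [c] <:+: w := by
  obtain ⟨s, rfl⟩ := hu
  rw [occ_eq_ncard_splits, Set.ncard_eq_one]
  constructor
  · rintro ⟨p, hp⟩ c ⟨s', t', h⟩
    have h1 : (s, []) ∈ {p : Word × Word | p.1 ++ u ++ p.2 = s ++ u} := by simp
    have h2 : (s', c :: t') ∈ {p : Word × Word | p.1 ++ u ++ p.2 = s ++ u} := by
      simpa [List.append_assoc] using h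
    rw [hp] at h1 h2
    simpa using h1.trans h2.symm
  · intro h
    refine ⟨(s, []), Set.eq_singleton_iff_unique_mem.2 ⟨by simp, ?_⟩⟩
    rintro ⟨s', _ | ⟨c, t'⟩⟩ hst
    · simpa using hst
    · exact absurd ⟨s', t', by simpa [List.append_assoc] using hst⟩ (h c)

end Occurrences

section UniqueFactors

variable {w u : Word} {c : Bool}

lemma Kp_le_length_iff (hu : u <:+ w) : Kp w ≤ u.length ↔ ∀ c, ¬ u ++ [c] <:+: w := by
  have hmem : ∀ v, v <:+ w → (v.length ∈ {n | n ≤ w.length ∧ occ (w.drop (w.length - n)) w = 1}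
      ↔ ∀ c, ¬ v ++ [c] <:+: w) := fun v hv => by
    rw [Set.mem_ofPred_eq, ← List.suffix_iff_eq_drop.1 hv, occ_eq_one_iff_of_suffix hv]
    exact and_iff_right hv.length_le
  have hw : ∀ c, ¬ w ++ [c] <:+: w := fun c hc => by simpa using hc.length_le
  have hK : Kp w ∈ {n | n ≤ w.length ∧ occ (w.drop (w.length - n)) w = 1} :=
    Nat.sInf_mem ⟨_, (hmem w (List.suffix_refl w)).2 hw⟩
  refine ⟨fun hKu c hc => ?_, fun h => Nat.sInf_le ((hmem u hu).2 h)⟩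
  set v := w.drop (w.length - Kp w)
  have hv : v <:+ w := List.drop_suffix _ w
  have hvlen : v.length = Kp w := by have := hK.1; simp only [v, List.length_drop]; omega
  refine (hmem v hv).1 (hvlen ▸ hK) c ?_
  exact (List.suffix_append_self_iff.2
    (List.suffix_of_suffix_length_le hv hu (hvlen ▸ hKu))).isInfix.trans hc

lemma Kp_le_length (w : Word) : Kp w ≤ w.length :=
  (Kp_le_length_iff (List.suffix_refl w)).2 fun _ hc => by simpa using hc.length_le

lemma Kp_reverse (w : Word) : Kp w.reverse = Hp w := by
  unfold Kp Hp
  congr 1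
  ext n
  simp only [Set.mem_ofPred_eq, List.length_reverse, ← List.reverse_take, occ_reverse]

lemma length_lt_Hp (hu : u <+: w) (hc : c :: u <:+: w) : u.length < Hp w := by
  rw [← Kp_reverse, ← List.length_reverse, ← not_le,
    Kp_le_length_iff (List.reverse_suffix.2 hu)]
  exact fun h => h c (by simpa using List.reverse_infix.2 hc)

end UniqueFactors

section FactorCounting

variable {w u v : Word} {n : ℕ}

def factorsFollowedBy (w : Word) (n : ℕ) (c : Bool) : Set Word :=
  {u | u.length = n ∧ u ++ [c] <:+: w}

def rightExtendableFactors (w : Word) (n : ℕ) : Set Word :=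
  {u | u.length = n ∧ ∃ c, u ++ [c] <:+: w}

def rightSpecialFactors (w : Word) (n : ℕ) : Set Word :=
  {u | u.length = n ∧ RightSpecial w u}

def leftSpecialFactors (w : Word) (n : ℕ) : Set Word :=
  {u | u.length = n ∧ LeftSpecial w u}

lemma factorSet_finite (w : Word) (n : ℕ) : (factorSet w n).Finite :=
  (List.finite_toSet w.sublists).subset fun _ hu => List.mem_sublists.2 hu.2.sublist

lemma factorSet_zero (w : Word) : factorSet w 0 = {[]} := by
  ext u
  simp only [factorSet, Set.mem_ofPred_eq, List.length_eq_zero_iff, Set.mem_singleton_iff,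
    and_iff_left_iff_imp]
  rintro rfl
  exact List.nil_infix

lemma factorSet_eq_empty (h : w.length < n) : factorSet w n = ∅ :=
  Set.eq_empty_of_forall_notMem fun _ hu => by have := hu.2.length_le; have := hu.1; omega

lemma factorSet_mono (h : v <:+: w) (n : ℕ) : factorSet v n ⊆ factorSet w n :=
  fun _ hu => ⟨hu.1, hu.2.trans h⟩

lemma factorSet_reverse (w : Word) (n : ℕ) :
    factorSet w.reverse n = List.reverse '' factorSet w n := by
  ext u
  refine ⟨fun hu => ⟨u.reverse, ⟨by simp [hu.1], ?_⟩, u.reverse_reverse⟩, ?_⟩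
  · simpa using List.reverse_infix.2 hu.2
  · rintro ⟨u, hu, rfl⟩
    exact ⟨by simp [hu.1], List.reverse_infix.2 hu.2⟩

lemma Trapezoidal.of_infix (hw : Trapezoidal w) (h : v <:+: w) : Trapezoidal v := fun n =>
  (Set.ncard_le_ncard (factorSet_mono h n) (factorSet_finite w n)).trans (hw n)

lemma Trapezoidal.reverse (hw : Trapezoidal w) : Trapezoidal w.reverse := fun n => by
  rw [factorSet_reverse, List.reverse_injective.injOn.ncard_image]
  exact hw n

lemma factorsFollowedBy_finite (w : Word) (n : ℕ) (c : Bool) :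
    (factorsFollowedBy w n c).Finite :=
  (factorSet_finite w n).subset fun u hu => ⟨hu.1, (List.prefix_append u [c]).isInfix.trans hu.2⟩

lemma ncard_factorSet_succ (w : Word) (n : ℕ) :
    (factorSet w (n + 1)).ncard =
      (factorsFollowedBy w n false).ncard + (factorsFollowedBy w n true).ncard := by
  have hsplit : factorSet w (n + 1) = (· ++ [false]) '' factorsFollowedBy w n false ∪
      (· ++ [true]) '' factorsFollowedBy w n true := by
    ext v
    rcases v.eq_nil_or_concat with rfl | ⟨u, c, rfl⟩
    · simp [factorSet]
    · cases c <;> simp [factorSet, factorsFollowedBy]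
  rw [hsplit, Set.ncard_union_eq ?_ ((factorsFollowedBy_finite ..).image _)
    ((factorsFollowedBy_finite ..).image _),
    (List.append_left_injective _).injOn.ncard_image,
    (List.append_left_injective _).injOn.ncard_image]
  rw [Set.disjoint_left]
  rintro _ ⟨u, -, rfl⟩ ⟨v, -, h⟩
  simp at h

lemma rightExtendableFactors_subset (w : Word) (n : ℕ) :
    rightExtendableFactors w n ⊆ factorSet w n :=
  fun u ⟨hn, _, hc⟩ => ⟨hn, (List.prefix_append u _).isInfix.trans hc⟩

lemma rightSpecialFactors_finite (w : Word) (n : ℕ) : (rightSpecialFactors w n).Finite :=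
  (factorSet_finite w n).subset fun _ hu => rightExtendableFactors_subset w n ⟨hu.1, _, hu.2.1⟩

lemma ncard_factorSet_succ_eq (w : Word) (n : ℕ) :
    (factorSet w (n + 1)).ncard =
      (rightExtendableFactors w n).ncard + (rightSpecialFactors w n).ncard := by
  have hunion : factorsFollowedBy w n false ∪ factorsFollowedBy w n true =
      rightExtendableFactors w n := by
    ext u
    simp only [factorsFollowedBy, rightExtendableFactors, Set.mem_union, Set.mem_ofPred_eq,
      Bool.exists_bool]
    tauto
  have hinter : factorsFollowedBy w n false ∩ factorsFollowedBy w n true =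
      rightSpecialFactors w n := by
    ext u
    simp only [factorsFollowedBy, rightSpecialFactors, RightSpecial, Set.mem_inter_iff,
      Set.mem_ofPred_eq]
    tauto
  rw [ncard_factorSet_succ, ← Set.ncard_union_add_ncard_inter _ _ (factorsFollowedBy_finite ..)
    (factorsFollowedBy_finite ..), hunion, hinter]

lemma suffix_of_forall_not_append_infix (hu : u <:+: w) (h : ∀ c, ¬ u ++ [c] <:+: w) :
    u <:+ w := by
  obtain ⟨s, _ | ⟨c, t⟩, hw⟩ := hu
  · exact ⟨s, by simpa using hw⟩
  · exact absurd ⟨s, t, by simpa using hw⟩ (h c)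

lemma ncard_factorSet_eq (w : Word) (n : ℕ) :
    (factorSet w n).ncard =
      (rightExtendableFactors w n).ncard + if n ≤ w.length ∧ Kp w ≤ n then 1 else 0 := by
  have hdiff : factorSet w n \ rightExtendableFactors w n =
      {u | u = w.drop (w.length - n) ∧ n ≤ w.length ∧ Kp w ≤ n} := by
    ext u
    simp only [factorSet, rightExtendableFactors, Set.mem_sdiff, Set.mem_ofPred_eq, not_and,
      not_exists]
    constructor
    · rintro ⟨⟨rfl, hu⟩, hne⟩
      have hsuf := suffix_of_forall_not_append_infix hu (hne rfl)
      exact ⟨List.suffix_iff_eq_drop.1 hsuf, hsuf.length_le,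
        (Kp_le_length_iff hsuf).2 (hne rfl)⟩
    · rintro ⟨rfl, hn, hK⟩
      have hsuf : w.drop (w.length - n) <:+ w := List.drop_suffix _ w
      have hlen : (w.drop (w.length - n)).length = n := by simp; omega
      exact ⟨⟨hlen, hsuf.isInfix⟩, fun _ => (Kp_le_length_iff hsuf).1 (by rw [hlen]; exact hK)⟩
  rw [← Set.ncard_sdiff_add_ncard_of_subset (rightExtendableFactors_subset w n)
    (factorSet_finite w n), hdiff, add_comm]
  split_ifs with h <;> simp [h]

lemma ncard_factorSet_succ_add (w : Word) (n : ℕ) :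
    (factorSet w (n + 1)).ncard + (if n ≤ w.length ∧ Kp w ≤ n then 1 else 0) =
      (factorSet w n).ncard + (rightSpecialFactors w n).ncard := by
  rw [ncard_factorSet_succ_eq, ncard_factorSet_eq]
  ring

-- `N - Kp w` counts the lengths `n < N` with `Kp w ≤ n`.
lemma ncard_factorSet_add_sub_Kp {N : ℕ} (hN : N ≤ w.length + 1) :
    (factorSet w N).ncard + (N - Kp w) =
      1 + ∑ n ∈ Finset.range N, (rightSpecialFactors w n).ncard := by
  induction N with
  | zero => simp [factorSet_zero]
  | succ N ih =>
    have hstep := ncard_factorSet_succ_add w N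
    have hK := Kp_le_length w
    rw [Finset.sum_range_succ, ← add_assoc, ← ih (by omega)]
    split_ifs at hstep <;> omega

lemma sum_ncard_rightSpecialFactors_add_Kp (w : Word) :
    ∑ n ∈ Finset.range (w.length + 1), (rightSpecialFactors w n).ncard + Kp w = w.length := by
  have h := ncard_factorSet_add_sub_Kp (w := w) le_rfl
  rw [factorSet_eq_empty (Nat.lt_succ_self _), Set.ncard_empty] at h
  have := Kp_le_length w
  omega

end FactorCounting

section RightSpecial

variable {w u v : Word} {n : ℕ}

lemma RightSpecial.of_suffix (h : RightSpecial w u) (hv : v <:+ u) : RightSpecial w v :=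
  ⟨(List.suffix_append_self_iff.2 hv).isInfix.trans h.1,
    (List.suffix_append_self_iff.2 hv).isInfix.trans h.2⟩

lemma RightSpecial.length_lt (h : RightSpecial w u) : u.length < w.length := by
  simpa using h.1.length_le

lemma rightSpecialFactors_nonempty_iff : (rightSpecialFactors w n).Nonempty ↔ n < Rp w := by
  have hmem : w.length ∈ {n | ∀ u : Word, u.length = n → ¬ RightSpecial w u} :=
    fun u hu h => h.length_lt.ne hu
  constructor
  · rintro ⟨u, rfl, hu⟩
    by_contra! hR
    have hRmem : Rp w ∈ {n | ∀ u : Word, u.length = n → ¬ RightSpecial w u} :=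
      Nat.sInf_mem ⟨_, hmem⟩
    exact hRmem (u.drop (u.length - Rp w)) (by simp only [List.length_drop]; omega)
      (hu.of_suffix (List.drop_suffix _ u))
  · intro hR
    simpa [rightSpecialFactors, Set.Nonempty] using Nat.notMem_of_lt_sInf hR

lemma Rp_le_length (w : Word) : Rp w ≤ w.length :=
  Nat.sInf_le fun _ hu h => h.length_lt.ne hu

lemma ncard_rightSpecialFactors_pos_iff : 0 < (rightSpecialFactors w n).ncard ↔ n < Rp w := by
  rw [Set.ncard_pos (rightSpecialFactors_finite w n), rightSpecialFactors_nonempty_iff]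

lemma ncard_rightSpecialFactors_le_one_iff :
    (rightSpecialFactors w n).ncard ≤ 1 ↔ (rightSpecialFactors w n).Subsingleton :=
  have := (rightSpecialFactors_finite w n).to_subtype
  Set.ncard_le_one_iff_subsingleton

lemma le_sum_ncard_rightSpecialFactors (h : n ≤ Rp w) :
    n ≤ ∑ m ∈ Finset.range n, (rightSpecialFactors w m).ncard := by
  have := Finset.card_nsmul_le_sum (Finset.range n) _ 1 fun m hm =>
    ncard_rightSpecialFactors_pos_iff.2 ((Finset.mem_range.1 hm).trans_le h)
  rwa [Finset.card_range, smul_eq_mul, mul_one] at this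

lemma sum_range_Rp_ncard_rightSpecialFactors_add_Kp (w : Word) :
    ∑ n ∈ Finset.range (Rp w), (rightSpecialFactors w n).ncard + Kp w = w.length := by
  rw [← sum_ncard_rightSpecialFactors_add_Kp w, Finset.sum_subset]
  · exact Finset.range_subset_range.2 (by have := Rp_le_length w; omega)
  · intro n _ hn
    rw [Finset.mem_range] at hn
    exact Nat.eq_zero_of_not_pos (mt ncard_rightSpecialFactors_pos_iff.1 hn)

theorem length_eq_Rp_add_Kp_iff :
    w.length = Rp w + Kp w ↔ ∀ n, (rightSpecialFactors w n).Subsingleton := by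
  have hpos : ∀ n ∈ Finset.range (Rp w), 1 ≤ (rightSpecialFactors w n).ncard :=
    fun n hn => ncard_rightSpecialFactors_pos_iff.2 (Finset.mem_range.1 hn)
  calc w.length = Rp w + Kp w
      ↔ ∑ n ∈ Finset.range (Rp w), 1 =
          ∑ n ∈ Finset.range (Rp w), (rightSpecialFactors w n).ncard := by
        rw [← sum_range_Rp_ncard_rightSpecialFactors_add_Kp w, add_left_inj, Finset.sum_const,
          Finset.card_range, smul_eq_mul, mul_one, eq_comm]
    _ ↔ ∀ n ∈ Finset.range (Rp w), 1 = (rightSpecialFactors w n).ncard :=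
        Finset.sum_eq_sum_iff_of_le hpos
    _ ↔ ∀ n, (rightSpecialFactors w n).Subsingleton := by
        simp only [← ncard_rightSpecialFactors_le_one_iff]
        refine ⟨fun h n => ?_, fun h n hn => le_antisymm (hpos n hn) (h n)⟩
        by_cases hn : n < Rp w
        · exact (h n (Finset.mem_range.2 hn)).ge
        · exact (Nat.eq_zero_of_not_pos (mt ncard_rightSpecialFactors_pos_iff.1 hn)).trans_le
            zero_le_one

end RightSpecial

section Reversal

variable {w u : Word} {n : ℕ}

lemma rightSpecial_reverse_iff : RightSpecial w.reverse u ↔ LeftSpecial w u.reverse := by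
  simp only [RightSpecial, LeftSpecial, ← List.reverse_infix (l₁ := _ ++ [_]),
    List.reverse_append, List.reverse_reverse, List.reverse_singleton, List.singleton_append]

lemma rightSpecialFactors_reverse (w : Word) (n : ℕ) :
    rightSpecialFactors w.reverse n = List.reverse '' leftSpecialFactors w n := by
  ext u
  refine ⟨fun hu => ⟨u.reverse, ⟨by simp [hu.1], rightSpecial_reverse_iff.1 hu.2⟩,
    u.reverse_reverse⟩, ?_⟩
  rintro ⟨u, hu, rfl⟩
  exact ⟨by simp [hu.1], rightSpecial_reverse_iff.2 (by simpa using hu.2)⟩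

lemma rightSpecialFactors_reverse_subsingleton_iff :
    (rightSpecialFactors w.reverse n).Subsingleton ↔ (leftSpecialFactors w n).Subsingleton := by
  rw [rightSpecialFactors_reverse, List.reverse_injective.subsingleton_image_iff]

lemma Rp_reverse (w : Word) : Rp w.reverse = Lp w := by
  unfold Rp Lp
  congr 1
  ext n
  refine ⟨fun h u hu hl => h u.reverse (by simp [hu]) ?_, fun h u hu hr => ?_⟩
  · rwa [rightSpecial_reverse_iff, List.reverse_reverse]
  · exact h u.reverse (by simp [hu]) (rightSpecial_reverse_iff.1 hr)

theorem length_eq_Lp_add_Hp_iff :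
    w.length = Lp w + Hp w ↔ ∀ n, (leftSpecialFactors w n).Subsingleton := by
  simpa only [List.length_reverse, Rp_reverse, Kp_reverse,
    rightSpecialFactors_reverse_subsingleton_iff] using length_eq_Rp_add_Kp_iff (w := w.reverse)

end Reversal

section SpecialPairs

variable {w u x : Word} {n : ℕ} {a : Bool}

lemma RightSpecial.append_infix (h : RightSpecial w u) (c : Bool) : u ++ [c] <:+: w := by
  cases c
  exacts [h.1, h.2]

lemma leftSpecial_append_of_rightSpecial_cons {b : Bool} (ha : RightSpecial w (a :: u))
    (hb : RightSpecial w (b :: u)) (hab : a ≠ b) (c : Bool) : LeftSpecial w (u ++ [c]) := by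
  have hd : ∀ d, RightSpecial w (d :: u) := fun d => by
    obtain rfl | rfl : d = a ∨ d = b := by cases a <;> cases b <;> cases d <;> simp_all
    exacts [ha, hb]
  exact ⟨(hd false).append_infix c, (hd true).append_infix c⟩

lemma exists_leftSpecialFactors_nontrivial (h : (rightSpecialFactors w n).Nontrivial) :
    ∃ m ≤ n, (leftSpecialFactors w m).Nontrivial := by
  induction n with
  | zero =>
    obtain ⟨u, hu, v, hv, hne⟩ := h
    exact absurd ((List.length_eq_zero_iff.1 hu.1).trans (List.length_eq_zero_iff.1 hv.1).symm) hne
  | succ n ih =>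
    obtain ⟨_ | ⟨a, u⟩, ⟨hu, hau⟩, _ | ⟨b, v⟩, ⟨hv, hbv⟩, hne⟩ := h
    · simp at hu
    · simp at hu
    · simp at hv
    simp only [List.length_cons, Nat.add_right_cancel_iff] at hu hv
    by_cases huv : u = v
    · subst huv
      have hab : a ≠ b := fun h => hne (h ▸ rfl)
      refine ⟨n + 1, le_rfl, u ++ [false], ⟨by simp [hu], ?_⟩, u ++ [true], ⟨by simp [hu], ?_⟩,
        by simp⟩ <;> exact leftSpecial_append_of_rightSpecial_cons hau hbv hab _
    · obtain ⟨m, hm, hls⟩ := ih ⟨u, ⟨hu, hau.of_suffix (List.suffix_cons a u)⟩,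
        v, ⟨hv, hbv.of_suffix (List.suffix_cons b v)⟩, huv⟩
      exact ⟨m, hm.trans n.le_succ, hls⟩

lemma forall_rightSpecialFactors_subsingleton_of_left
    (h : ∀ n, (leftSpecialFactors w n).Subsingleton) (n : ℕ) :
    (rightSpecialFactors w n).Subsingleton := by
  by_contra hnt
  obtain ⟨m, -, hm⟩ := exists_leftSpecialFactors_nontrivial (Set.not_subsingleton_iff.1 hnt)
  exact hm.not_subsingleton (h m)

lemma forall_leftSpecialFactors_subsingleton_of_right
    (h : ∀ n, (rightSpecialFactors w n).Subsingleton) (n : ℕ) :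
    (leftSpecialFactors w n).Subsingleton := by
  rw [← rightSpecialFactors_reverse_subsingleton_iff]
  refine forall_rightSpecialFactors_subsingleton_of_left (fun m => ?_) n
  rw [← rightSpecialFactors_reverse_subsingleton_iff, List.reverse_reverse]
  exact h m

lemma exists_cons_infix_cons (h : u <:+: w) : ∃ d, d :: u <:+: a :: w := by
  induction w generalizing a with
  | nil => exact ⟨a, by rw [List.eq_nil_of_infix_nil h]⟩
  | cons b w ih =>
    rcases List.infix_cons_iff.1 h with hp | hi
    · exact ⟨a, (List.prefix_cons_inj a).2 hp |>.isInfix⟩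
    · obtain ⟨d, hd⟩ := ih (a := b) hi
      exact ⟨d, List.infix_cons hd⟩

lemma length_lt_Hp_of_not_rightSpecial_tail (hx : RightSpecial (a :: w) x)
    (hx' : ¬ RightSpecial w x) : x.length < Hp (a :: w) := by
  obtain ⟨c, hc, hc'⟩ : ∃ c, x ++ [c] <:+: a :: w ∧ ¬ x ++ [c] <:+: w := by
    rw [RightSpecial, not_and_or] at hx'
    rcases hx' with h | h
    exacts [⟨false, hx.1, h⟩, ⟨true, hx.2, h⟩]
  have hpre : x ++ [c] <+: a :: w := (List.infix_cons_iff.1 hc).resolve_right hc'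
  have hother : x ++ [!c] <:+: w := by
    refine (List.infix_cons_iff.1 (hx.append_infix _)).resolve_left fun hp => ?_
    have := List.prefix_of_prefix_length_le hpre hp (by simp)
    simp at this
  obtain ⟨d, hd⟩ := exists_cons_infix_cons (a := a) ((List.prefix_append x _).isInfix.trans hother)
  exact length_lt_Hp ((List.prefix_append x _).trans hpre) hd

end SpecialPairs

section Trapezoidal

variable {w : Word} {n : ℕ}

lemma Trapezoidal.rightSpecialFactors_subsingleton_of_lt_Kp (hw : Trapezoidal w)
    (hn : n < Kp w) : (rightSpecialFactors w n).Subsingleton := by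
  rw [← ncard_rightSpecialFactors_le_one_iff]
  by_contra! htwo
  have hR : n < Rp w := ncard_rightSpecialFactors_pos_iff.1 (by omega)
  have hcount := ncard_factorSet_add_sub_Kp (w := w) (N := n + 1)
    (by have := Kp_le_length w; omega)
  rw [Finset.sum_range_succ, Nat.sub_eq_zero_of_le hn] at hcount
  have := le_sum_ncard_rightSpecialFactors hR.le
  have := hw (n + 1)
  omega

lemma Trapezoidal.leftSpecialFactors_subsingleton_of_lt_Hp (hw : Trapezoidal w)
    (hn : n < Hp w) : (leftSpecialFactors w n).Subsingleton := by
  rw [← rightSpecialFactors_reverse_subsingleton_iff]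
  exact hw.reverse.rightSpecialFactors_subsingleton_of_lt_Kp (by rwa [Kp_reverse])

theorem Trapezoidal.rightSpecialFactors_subsingleton (hw : Trapezoidal w) (n : ℕ) :
    (rightSpecialFactors w n).Subsingleton := by
  induction w generalizing n with
  | nil => exact fun u hu => absurd hu.2.length_lt (Nat.not_lt_zero _)
  | cons a w ih =>
    by_contra hnt
    rw [Set.not_subsingleton_iff] at hnt
    obtain ⟨x, hx, hx'⟩ : ∃ x ∈ rightSpecialFactors (a :: w) n, ¬ RightSpecial w x := by
      obtain ⟨u, hu, v, hv, hne⟩ := hnt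
      by_contra! h
      exact hne (ih (hw.of_infix (List.suffix_cons a w).isInfix) n ⟨hu.1, h u hu⟩ ⟨hv.1, h v hv⟩)
    have hH : n < Hp (a :: w) := hx.1 ▸ length_lt_Hp_of_not_rightSpecial_tail hx.2 hx'
    obtain ⟨m, hm, hls⟩ := exists_leftSpecialFactors_nontrivial hnt
    exact hls.not_subsingleton (hw.leftSpecialFactors_subsingleton_of_lt_Hp (by omega))

lemma natAbs_sub_ncard_factorSet_le_one (h : (rightSpecialFactors w n).Subsingleton) :
    (((factorSet w (n + 1)).ncard : ℤ) - (factorSet w n).ncard).natAbs ≤ 1 := by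
  have hstep := ncard_factorSet_succ_add w n
  have := ncard_rightSpecialFactors_le_one_iff.2 h
  split_ifs at hstep <;> omega

lemma trapezoidal_of_natAbs_sub_ncard_factorSet_le_one
    (h : ∀ n, (((factorSet w (n + 1)).ncard : ℤ) - (factorSet w n).ncard).natAbs ≤ 1) :
    Trapezoidal w := by
  intro n
  induction n with
  | zero => simp [factorSet_zero]
  | succ n ih => have := h n; omega

end Trapezoidal

/-- Characterizations of trapezoidal words (Proposition 2 of the paper). -/
theorem trapezoidal_tfae (w : Word) :
    [ Trapezoidal w,
      w.length = Lp w + Hp w,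
      w.length = Rp w + Kp w,
      ∀ n : ℕ, {u : Word | u.length = n ∧ LeftSpecial w u}.Subsingleton,
      ∀ n : ℕ, {u : Word | u.length = n ∧ RightSpecial w u}.Subsingleton,
      ∀ n : ℕ, (((factorSet w (n + 1)).ncard : ℤ) - ((factorSet w n).ncard : ℤ)).natAbs ≤ 1
    ].TFAE := by
  tfae_have 1 → 5 := Trapezoidal.rightSpecialFactors_subsingleton
  tfae_have 5 → 6 := fun h n => natAbs_sub_ncard_factorSet_le_one (h n)
  tfae_have 6 → 1 := trapezoidal_of_natAbs_sub_ncard_factorSet_le_one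
  tfae_have 3 ↔ 5 := length_eq_Rp_add_Kp_iff
  tfae_have 2 ↔ 4 := length_eq_Lp_add_Hp_iff
  tfae_have 4 ↔ 5 := ⟨forall_rightSpecialFactors_subsingleton_of_left,
    forall_leftSpecialFactors_subsingleton_of_right⟩
  tfae_finish
end

section
/- Let w be a non-balanced word over {a,b} and let m be the minimal length of a pathological pair of w. Then there exists exactly one word u such that aua and bub are both factors of w and |u| + 2 = m. -/
open List

/-!
Let `(f, g)` be a pathological pair of minimal length `m`, with `|f|_a ≥ |g|_a + 2`. Deleting the
first (or the last) letter of both words leaves a non-pathological pair, which forces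
`f = a f₁ a` and `g = b g₁ b` with `|g₁|_a ≤ |f₁|_a`. Now whenever `a u a` and `b v b` are factors
with `|u| = |v| = m - 2` and `|v|_a ≤ |u|_a`, we get `u = v`: at the first position where `u` and
`v` differ, either `u` has the letter `a`, and `(a p a, b p b)` for their common prefix `p` is a
shorter pathological pair, or `u` has the letter `b`, and then the remainders `s`, `t` satisfy
`|s|_a > |t|_a`, so that `(s a, t b)` is one. This gives `f₁ = g₁`, and uniqueness after
swapping the roles of two candidates `u`, `v` if needed.
-/

theorem List.exists_append_cons_of_length_eq_of_ne {α : Type*} :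
    ∀ {u v : List α}, u.length = v.length → u ≠ v →
      ∃ p x y s t, x ≠ y ∧ u = p ++ x :: s ∧ v = p ++ y :: t
  | [], [], _, hne => absurd rfl hne
  | x :: u, y :: v, hlen, hne => by
    by_cases hxy : x = y
    · subst hxy
      obtain ⟨p, x', y', s, t, hx'y', rfl, rfl⟩ :=
        exists_append_cons_of_length_eq_of_ne (by simpa using hlen) (by simpa using hne)
      exact ⟨x :: p, x', y', s, t, hx'y', rfl, rfl⟩
    · exact ⟨[], x, y, u, v, hxy, rfl, rfl⟩

theorem List.exists_eq_cons_append_singleton {α : Type*} {l : List α} (hl : 2 ≤ l.length) :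
    ∃ x l' y, l = x :: l' ++ [y] := by
  obtain ⟨x, l', rfl⟩ := List.exists_cons_of_length_pos (by omega : 0 < l.length)
  rcases l'.eq_nil_or_concat' with rfl | ⟨l'', y, rfl⟩
  · simp at hl
  · exact ⟨x, l'', y, rfl⟩

section PathPair

variable {w f g : Word}

theorem pathPair_of_count_add_two_le (hf : f <:+: w) (hg : g <:+: w)
    (hlen : f.length = g.length) (hc : g.count false + 2 ≤ f.count false) :
    PathPair w f g :=
  ⟨hf, hg, hlen, by omega⟩

theorem exists_pathPair_of_not_balancedWord (hw : ¬ BalancedWord w) :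
    ∃ f g, PathPair w f g := by
  simp only [BalancedWord, not_forall, not_le] at hw
  obtain ⟨f, g, hf, hg, hlen, c, hc⟩ := hw
  refine ⟨f, g, hf, hg, hlen, ?_⟩
  have hf' := List.count_false_add_count_true f
  have hg' := List.count_false_add_count_true g
  cases c <;> omega

theorem eq_of_forall_pathPair_le_length {u v : Word}
    (hmin : ∀ f g, PathPair w f g → u.length + 2 ≤ f.length)
    (hu : [false] ++ u ++ [false] <:+: w) (hv : [true] ++ v ++ [true] <:+: w)
    (hlen : u.length = v.length) (hc : v.count false ≤ u.count false) : u = v := by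
  by_contra hne
  obtain ⟨p, x, y, s, t, hxy, rfl, rfl⟩ := List.exists_append_cons_of_length_eq_of_ne hlen hne
  simp only [List.length_append, List.length_cons] at hlen
  cases x <;> cases y
  · exact hxy rfl
  · have hpu : [false] ++ p ++ [false] <+: [false] ++ (p ++ false :: s) ++ [false] :=
      ⟨s ++ [false], by simp⟩
    have hpv : [true] ++ p ++ [true] <+: [true] ++ (p ++ true :: t) ++ [true] :=
      ⟨t ++ [true], by simp⟩
    have := hmin _ _ <| pathPair_of_count_add_two_le (hpu.isInfix.trans hu)
      (hpv.isInfix.trans hv) (by simp) (by simp)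
    simp at this
  · have hsu : s ++ [false] <:+ [false] ++ (p ++ true :: s) ++ [false] :=
      ⟨false :: p ++ [true], by simp⟩
    have htv : t ++ [true] <:+ [true] ++ (p ++ false :: t) ++ [true] :=
      ⟨true :: p ++ [false], by simp⟩
    simp only [List.count_append, List.count_cons_self,
      List.count_cons_of_ne (by decide : true ≠ false)] at hc
    have := hmin _ _ <| pathPair_of_count_add_two_le (hsu.isInfix.trans hu)
      (htv.isInfix.trans hv) (by simp; omega) (by simp; omega)
    simp at this
    omega
  · exact hxy rfl

theorem exists_of_minimal_pathPair (hmin : ∀ f' g', PathPair w f' g' → f.length ≤ f'.length)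
    (h : PathPair w f g) :
    ∃ u, [false] ++ u ++ [false] <:+: w ∧ [true] ++ u ++ [true] <:+: w ∧
      u.length + 2 = f.length := by
  obtain ⟨hf, hg, hlen, hc⟩ := h
  wlog hc : g.count false + 2 ≤ f.count false generalizing f g
  · exact hlen ▸ this (hlen ▸ hmin) hg hf hlen.symm (by omega) (by omega)
  have hf2 : 2 ≤ f.length := (by omega : 2 ≤ f.count false).trans List.count_le_length
  obtain ⟨x, f₁, x', rfl⟩ := List.exists_eq_cons_append_singleton hf2
  obtain ⟨y, g₁, y', rfl⟩ := List.exists_eq_cons_append_singleton (hlen ▸ hf2)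
  simp only [List.cons_append, List.length_cons, List.length_append,
    Nat.add_right_cancel_iff] at hlen
  obtain ⟨rfl, rfl⟩ : x = false ∧ y = true := by
    by_contra hxy
    have hf' : f₁ ++ [x'] <:+: w := (List.suffix_cons _ _).isInfix.trans hf
    have hg' : g₁ ++ [y'] <:+: w := (List.suffix_cons _ _).isInfix.trans hg
    have := hmin _ _ <| pathPair_of_count_add_two_le hf' hg' (by simpa using hlen) <| by
      cases x <;> cases y <;> simp_all; omega
    simp at this
  obtain ⟨rfl, rfl⟩ : x' = false ∧ y' = true := by
    by_contra hxy
    have hf' : false :: f₁ <:+: w := (List.prefix_append _ _).isInfix.trans hf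
    have hg' : true :: g₁ <:+: w := (List.prefix_append _ _).isInfix.trans hg
    have := hmin _ _ <| pathPair_of_count_add_two_le hf' hg' (by simpa using hlen) <| by
      cases x' <;> cases y' <;> simp_all; omega
    simp at this
  have hfg : f₁ = g₁ := by
    refine eq_of_forall_pathPair_le_length (fun f' g' h => ?_) hf hg hlen ?_
    · have := hmin f' g' h
      simp only [List.cons_append, List.length_cons, List.length_append] at this
      omega
    · simpa [List.count_cons] using hc
  subst hfg
  exact ⟨f₁, hf, hg, by simp⟩

end PathPair

/-- For a non-balanced word `w`, if `m` is the minimal length of a pathological pair of `w`,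
then there is exactly one word `u` such that `aua` and `bub` are both factors of `w`
and `|u| + 2 = m`. -/
theorem unique_central_of_min_pathological (w : Word) (hw : ¬ BalancedWord w) (m : ℕ)
    (hm : m = sInf {n : ℕ | ∃ f g : Word, PathPair w f g ∧ f.length = n}) :
    ∃! u : Word, ([false] ++ u ++ [false]) <:+: w ∧ ([true] ++ u ++ [true]) <:+: w ∧
      u.length + 2 = m := by
  set lengths := {n : ℕ | ∃ f g : Word, PathPair w f g ∧ f.length = n}
  have hmin : ∀ f g, PathPair w f g → m ≤ f.length := fun f g h =>
    hm ▸ Nat.sInf_le (show f.length ∈ lengths from ⟨f, g, h, rfl⟩)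
  obtain ⟨f, g, hfg, hfm⟩ : m ∈ lengths := by
    obtain ⟨f, g, hfg⟩ := exists_pathPair_of_not_balancedWord hw
    exact hm ▸ Nat.sInf_mem ⟨_, f, g, hfg, rfl⟩
  obtain ⟨u, hu⟩ := hfm ▸ exists_of_minimal_pathPair (hfm ▸ hmin) hfg
  refine ⟨u, hu, fun v hv => ?_⟩
  rcases le_total (v.count false) (u.count false) with hc | hc
  · exact (eq_of_forall_pathPair_le_length (hu.2.2 ▸ hmin) hu.1 hv.2.1 (by omega) hc).symm
  · exact eq_of_forall_pathPair_le_length (hv.2.2 ▸ hmin) hv.1 hu.2.1 (by omega) hc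
end

section
/- Let w be a non-balanced word over {a,b} and let (f,g) be a pathological pair of w of minimal length. Then f and g do not overlap in w: there is no factor of w of the form uvz with |v| > 0 such that f = uv and g = vz, nor one with g = uv and f = vz. -/
open List

theorem PathPair.symm {w f g : Word} (h : PathPair w f g) : PathPair w g f := by
  obtain ⟨hf, hg, hlen, hcount⟩ := h
  refine ⟨hg, hf, hlen.symm, ?_⟩
  rwa [← Int.natAbs_neg, neg_sub]

theorem PathPair.of_overlap {w u v z : Word} (hw : u ++ v ++ z <:+: w)
    (h : PathPair w (u ++ v) (v ++ z)) : PathPair w u z := by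
  obtain ⟨-, -, hlen, hcount⟩ := h
  refine ⟨(u.prefix_append (v ++ z)).isInfix.trans (by simpa only [append_assoc] using hw),
    (suffix_append (u ++ v) z).isInfix.trans hw, by simp only [length_append] at hlen; omega, ?_⟩
  have hdiff : ((u ++ v).count false : ℤ) - ((v ++ z).count false : ℤ)
      = (u.count false : ℤ) - (z.count false : ℤ) := by
    push_cast [count_append]; ring
  rwa [hdiff] at hcount

theorem pathological_pair_no_overlap_general (w f g : Word)
    (hfg : PathPair w f g)
    (hmin : ∀ f' g' : Word, PathPair w f' g' → f.length ≤ f'.length) :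
    ¬ ∃ u v z : Word, (u ++ v ++ z) <:+: w ∧ v ≠ [] ∧
        ((f = u ++ v ∧ g = v ++ z) ∨ (g = u ++ v ∧ f = v ++ z)) := by
  rintro ⟨u, v, z, hsub, hv, ⟨rfl, rfl⟩ | ⟨rfl, rfl⟩⟩
  · have hle := hmin u z (hfg.of_overlap hsub)
    exact hv (by simpa using hle)
  · have hle := hmin z u (hfg.symm.of_overlap hsub).symm
    exact hv (by simpa using hle)

/-- A pathological pair of minimal length of a non-balanced word does not overlap. -/
theorem pathological_pair_no_overlap (w f g : Word) (hw : ¬ BalancedWord w)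
    (hfg : PathPair w f g)
    (hmin : ∀ f' g' : Word, PathPair w f' g' → f.length ≤ f'.length) :
    ¬ ∃ u v z : Word, (u ++ v ++ z) <:+: w ∧ v ≠ [] ∧
        ((f = u ++ v ∧ g = v ++ z) ∨ (g = u ++ v ∧ f = v ++ z)) :=
  pathological_pair_no_overlap_general w f g hfg hmin
end

section
/- Let w be a trapezoidal non-balanced word over {a,b}, let (f,g) be its pathological pair of minimal length, and suppose w = pq where p is a suffix of some power of the reversal of the fractional root z_f of f, and q is a prefix of some power of the fractional root z_g of g. Then p and q are balanced words. -/
open List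

/-- The minimal period of a word. -/
noncomputable def minPeriod (u : Word) : ℕ := sInf {p : ℕ | _root_.HasPeriod u p}

/-- The fractional root of a word: its prefix of length the minimal period. -/
noncomputable def fracRoot (u : Word) : Word := u.take (minPeriod u)

/-! `p` is a factor of `w` and of a power of a word `z` with `|z| ≤ |f|`. In a power
of `z` every factor of length `|z|` has the letter counts of `z`, so cutting such a block off the
front of both members of a pathological pair of `p` keeps it pathological; repeating this yields a
pathological pair of `w` shorter than `|z| ≤ |f|`, contradicting the minimality of `f`. The same
argument applies to `q`, since `|g| = |f|`. -/

lemma length_fracRoot_le (u : Word) : (fracRoot u).length ≤ u.length :=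
  List.length_take_le' _ _

lemma BalancedWord.of_forall_not_pathPair {w : Word} (h : ∀ u v, ¬ PathPair w u v) :
    BalancedWord w := by
  intro u v hu hv hlen c
  by_contra! hc
  have hu' := List.count_true_add_count_false u
  have hv' := List.count_true_add_count_false v
  refine h u v ⟨hu, hv, hlen, ?_⟩
  cases c <;> omega

namespace List

variable {α : Type*} [BEq α]

lemma count_take_length_drop_flatten_replicate (z : List α) (c : α) :
    ∀ k i, i + z.length ≤ k * z.length →
      (((replicate k z).flatten.drop i).take z.length).count c = z.count c
  | 0, i, h => by
    rw [length_eq_zero_iff.mp (by omega : z.length = 0)]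
    simp
  | k + 1, i, h => by
    -- a window starting inside the first copy of `z` is the rotation `z.drop i ++ z.take i`
    rw [replicate_succ, flatten_cons]
    by_cases hi : z.length ≤ i
    · rw [drop_append, drop_eq_nil_of_le hi, nil_append]
      exact count_take_length_drop_flatten_replicate z c k (i - z.length)
        (by rw [Nat.succ_mul] at h; omega)
    · have htake : ((replicate k z).flatten).take i = z.take i := by
        rcases k with _ | k
        · simp [show i = 0 by omega]
        · rw [replicate_succ, flatten_cons, take_append_of_le_length (by omega)]
      rw [drop_append_of_le_length (by omega), take_append, length_drop,
        take_of_length_le (by simp), show z.length - (z.length - i) = i by omega, htake,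
        ← rotate_eq_drop_append_take (by omega), (rotate_perm z i).count_eq]

lemma count_eq_of_infix_flatten_replicate {z y : List α} {k : ℕ}
    (hy : y <:+: (replicate k z).flatten) (hlen : y.length = z.length) (c : α) :
    y.count c = z.count c := by
  obtain ⟨s, t, hst⟩ := hy
  have hle : s.length + z.length ≤ k * z.length := by
    have := congrArg length hst
    simp only [length_append, length_flatten, map_replicate, sum_replicate, smul_eq_mul] at this
    omega
  rw [← count_take_length_drop_flatten_replicate z c k s.length hle, ← hst, append_assoc,
    drop_left, take_left' hlen]

lemma exists_infix_infix_length_lt_count_sub_eq {x : List α} {d N : ℕ} (hd : 0 < d) {c : α}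
    (hwin : ∀ y, y <:+: x → y.length = d → y.count c = N) {u v : List α}
    (hu : u <:+: x) (hv : v <:+: x) (hlen : u.length = v.length) :
    ∃ u' v', u' <:+: u ∧ v' <:+: v ∧ u'.length = v'.length ∧ u'.length < d ∧
      (u'.count c : ℤ) - v'.count c = (u.count c : ℤ) - v.count c := by
  induction hn : u.length using Nat.strong_induction_on generalizing u v with
  | _ n ih =>
  by_cases hud : u.length < d
  · exact ⟨u, v, infix_rfl, infix_rfl, hlen, hud, rfl⟩
  have hdrop {l : List α} (hl : l <:+: x) : l.drop d <:+: x := (drop_suffix _ _).isInfix.trans hl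
  have hcount {l : List α} (hl : l <:+: x) (hld : d ≤ l.length) :
      l.count c = N + (l.drop d).count c := by
    rw [← hwin (l.take d) ((take_prefix _ _).isInfix.trans hl) (length_take_of_le hld),
      ← count_append, take_append_drop]
  obtain ⟨u', v', hu', hv', hlen', hlt, hsub⟩ :=
    ih (n - d) (by omega) (hdrop hu) (hdrop hv) (by simp [hlen]) (by simp [hn])
  refine ⟨u', v', hu'.trans (drop_suffix _ _).isInfix, hv'.trans (drop_suffix _ _).isInfix,
    hlen', hlt, ?_⟩
  rw [hsub, hcount hu (by omega), hcount hv (by omega)]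
  push_cast
  ring

end List

lemma BalancedWord.of_infix_flatten_replicate {w p z : Word} {k : ℕ} (hpw : p <:+: w)
    (hpz : p <:+: (List.replicate k z).flatten)
    (hmin : ∀ f g : Word, PathPair w f g → z.length ≤ f.length) : BalancedWord p := by
  refine BalancedWord.of_forall_not_pathPair fun u v ⟨hu, hv, hlen, hpath⟩ => ?_
  rcases eq_or_ne z [] with rfl | hz
  · simp only [List.flatten_replicate_nil, List.infix_nil] at hpz
    obtain rfl := List.infix_nil.mp (hpz ▸ hu)
    obtain rfl := List.infix_nil.mp (hpz ▸ hv)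
    simp at hpath
  obtain ⟨u', v', hu', hv', hlen', hlt, hsub⟩ :=
    List.exists_infix_infix_length_lt_count_sub_eq (List.length_pos_iff.mpr hz)
      (fun y hy hyz => List.count_eq_of_infix_flatten_replicate hy hyz false)
      (hu.trans hpz) (hv.trans hpz) hlen
  have := hmin u' v' ⟨(hu'.trans hu).trans hpw, (hv'.trans hv).trans hpw, hlen', hsub ▸ hpath⟩
  omega

theorem factorization_parts_balanced_general (w p q f g : Word)
    (hfg : PathPair w f g)
    (hmin : ∀ f' g' : Word, PathPair w f' g' → f.length ≤ f'.length)
    (hw : w = p ++ q)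
    (hp : ∃ k : ℕ, p <:+ (List.replicate k (fracRoot f).reverse).flatten)
    (hq : ∃ k : ℕ, q <+: (List.replicate k (fracRoot g)).flatten) :
    BalancedWord p ∧ BalancedWord q := by
  obtain ⟨k, hp⟩ := hp
  obtain ⟨l, hq⟩ := hq
  subst hw
  refine ⟨.of_infix_flatten_replicate (List.prefix_append p q).isInfix hp.isInfix ?_,
    .of_infix_flatten_replicate (List.suffix_append p q).isInfix hq.isInfix ?_⟩
  · intro f' g' h
    rw [List.length_reverse]
    exact (length_fracRoot_le f).trans (hmin f' g' h)
  · intro f' g' h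
    exact (length_fracRoot_le g).trans (hfg.2.2.1 ▸ hmin f' g' h)

/-- In the factorization `w = pq` of a trapezoidal non-balanced word, with
`p` a suffix of a power of the reversed fractional root of `f` and `q` a prefix of a power of
the fractional root of `g`, the words `p` and `q` are balanced. -/
theorem factorization_parts_balanced (w p q f g : Word)
    (htrap : Trapezoidal w) (hnb : ¬ BalancedWord w)
    (hfg : PathPair w f g)
    (hmin : ∀ f' g' : Word, PathPair w f' g' → f.length ≤ f'.length)
    (hw : w = p ++ q)
    (hp : ∃ k : ℕ, p <:+ (List.replicate k (fracRoot f).reverse).flatten)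
    (hq : ∃ k : ℕ, q <+: (List.replicate k (fracRoot g)).flatten) :
    BalancedWord p ∧ BalancedWord q :=
  factorization_parts_balanced_general w p q f g hfg hmin hw hp hq
end

section
/- Every rich palindrome is a closed word. -/
open List

/-- The number of occurrences of `u` as a factor of `w` (counted by starting position). -/
noncomputable def occG {α : Type*} (u w : List α) : ℕ :=
  {i : ℕ | i + u.length ≤ w.length ∧ (w.drop i).take u.length = u}.ncard

/-- A word is closed if it is empty or has a factor, different from the word itself,
occurring exactly twice, as a prefix and as a suffix. -/
def ClosedWordG {α : Type*} (w : List α) : Prop :=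
  w = [] ∨ ∃ u : List α, u ≠ w ∧ u <+: w ∧ u <:+ w ∧ occG u w = 2

/-- A word is rich if it has exactly `|w| + 1` distinct palindromic factors. -/
def RichG {α : Type*} (w : List α) : Prop :=
  {u : List α | u <:+: w ∧ u.reverse = u}.ncard = w.length + 1

/-!
In a rich word every nonempty prefix `w[0, k)` ends with exactly one palindrome that does not
occur earlier in `w`. Indeed, the end of the first occurrence is injective on palindromic
factors, because a shorter palindromic suffix of a palindrome is also its prefix and hence
occurs earlier; richness says that there are exactly `|w|` nonempty palindromic factors, as many
as there are end positions.

Let `u` be the longest proper palindromic suffix of the palindrome `w`; it is also a prefix.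
If `u` reoccurred first with end `k < |w|`, the new palindrome ending at `k` could not be shorter
than `u`, so it has `u` as a prefix, and the choice of `k` forces it to be `w[0, k)`. That is a
palindromic prefix, hence a suffix, of `w` longer than `u`. So `u` occurs only as a prefix and
as a suffix of `w`.
-/

section

variable {α : Type*}

namespace List

theorem IsSuffix.isPrefix_of_reverse_eq {p w : List α} (h : p <:+ w) (hw : w.reverse = w)
    (hp : p.reverse = p) : p <+: w := by
  rw [← hw, ← hp]
  exact reverse_prefix.mpr h

theorem IsPrefix.isSuffix_of_reverse_eq {p w : List α} (h : p <+: w) (hw : w.reverse = w)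
    (hp : p.reverse = p) : p <:+ w := by
  rw [← hw, ← hp]
  exact reverse_suffix.mpr h

theorem IsPrefix.suffix_take_length {p w : List α} (h : p <+: w) : p <:+ w.take p.length := by
  rw [← prefix_iff_eq_take.mp h]

theorem IsSuffix.suffix_take_sub_add {p q w : List α} {k : ℕ} (hp : p <:+ w.take k)
    (hk : k ≤ w.length) (hq : q <+: p) : q <:+ w.take (k - p.length + q.length) := by
  obtain ⟨s, hs⟩ := hp
  obtain ⟨t, rfl⟩ := hq
  have hlen : s.length + (q ++ t).length = k := by
    simpa [hk] using congrArg length hs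
  have hmin : k - (q ++ t).length + q.length = min (s.length + q.length) k := by
    simp only [length_append] at hlen ⊢
    omega
  rw [hmin, ← take_take, ← hs, ← append_assoc, take_left' (by simp)]
  exact suffix_append s q

theorem IsInfix.exists_suffix_take {p w : List α} (h : p <:+: w) :
    ∃ k ≤ w.length, p <:+ w.take k := by
  obtain ⟨s, t, rfl⟩ := h
  refine ⟨s.length + p.length, by simp, ?_⟩
  rw [← length_append, take_left' rfl]
  exact suffix_append s p

end List

/-- `p <:+ w.take k` says that an occurrence of `p` in `w` ends at position `k`. If `p` is not a
factor of `w`, `firstEnd p w` is the junk value `sInf ∅ = 0`. -/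
noncomputable def firstEnd (p w : List α) : ℕ :=
  sInf {k | p <:+ w.take k}

section FirstEnd

variable {p w : List α}

theorem firstEnd_le {k : ℕ} (h : p <:+ w.take k) : firstEnd p w ≤ k :=
  Nat.sInf_le h

theorem suffix_take_firstEnd (h : p <:+: w) : p <:+ w.take (firstEnd p w) :=
  Nat.sInf_mem (h.exists_suffix_take.imp fun _ hk => hk.2)

theorem firstEnd_le_length (h : p <:+: w) : firstEnd p w ≤ w.length :=
  let ⟨_, hkw, hk⟩ := h.exists_suffix_take
  (firstEnd_le hk).trans hkw

theorem length_le_firstEnd (h : p <:+: w) : p.length ≤ firstEnd p w :=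
  (suffix_take_firstEnd h).length_le.trans (length_take_le _ _)

def palFactors (w : List α) : Set (List α) :=
  {u | u <:+: w ∧ u.reverse = u}

theorem nil_mem_palFactors (w : List α) : [] ∈ palFactors w :=
  ⟨nil_infix, rfl⟩

theorem firstEnd_injOn (w : List α) : Set.InjOn (firstEnd · w) (palFactors w) := by
  intro p hp q hq hpq
  wlog hle : p.length ≤ q.length generalizing p q
  · exact (this hq hp hpq.symm (by omega)).symm
  simp only at hpq
  have hq_end := suffix_take_firstEnd hq.1
  have hpq_suf : p <:+ q :=
    suffix_of_suffix_length_le (hpq ▸ suffix_take_firstEnd hp.1) hq_end hle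
  -- `p`, a prefix of `q`, already ends at `firstEnd q w - |q| + |p|`
  have := firstEnd_le <|
    hq_end.suffix_take_sub_add (firstEnd_le_length hq.1) (hpq_suf.isPrefix_of_reverse_eq hq.2 hp.2)
  exact hpq_suf.eq_of_length (by have := length_le_firstEnd hq.1; omega)

theorem RichG.surjOn_firstEnd (hrich : RichG w) :
    Set.SurjOn (firstEnd · w) (palFactors w \ {[]}) (Set.Icc 1 w.length) := by
  have hmaps : Set.MapsTo (firstEnd · w) (palFactors w \ {[]}) (Set.Icc 1 w.length) :=
    fun p hp => ⟨(length_pos_iff.mpr hp.2).trans_le (length_le_firstEnd hp.1.1),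
      firstEnd_le_length hp.1.1⟩
  have hcard : (palFactors w \ {[]}).ncard = w.length := by
    rw [Set.ncard_sdiff_singleton_of_mem (nil_mem_palFactors w)]
    exact Nat.sub_eq_of_eq_add hrich
  refine (Set.eq_of_subset_of_ncard_le hmaps.image_subset ?_ (Set.finite_Icc _ _)).symm.subset
  rw [((firstEnd_injOn w).mono Set.sdiff_subset).ncard_image, hcard,
    Set.ncard_Icc_nat]
  omega

end FirstEnd

/-- In a rich word, a complete return `w[0, k)` to a palindromic prefix `u` is a palindrome. -/
theorem RichG.reverse_take_eq_of_first_return {w u : List α} (hrich : RichG w)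
    (hu : u.reverse = u) (hpre : u <+: w) {k : ℕ} (hk : u.length < k) (hkw : k ≤ w.length)
    (hend : u <:+ w.take k) (hfirst : ∀ j, u.length < j → j < k → ¬ u <:+ w.take j) :
    (w.take k).reverse = w.take k := by
  obtain ⟨p, hp, hpk⟩ := hrich.surjOn_firstEnd ⟨by omega, hkw⟩
  simp only at hpk
  have hp_end : p <:+ w.take k := hpk ▸ suffix_take_firstEnd hp.1.1
  rcases le_or_gt p.length u.length with hle | hlt
  · have hpu : p <+: u :=
      (suffix_of_suffix_length_le hp_end hend hle).isPrefix_of_reverse_eq hu hp.1.2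
    have := firstEnd_le (hpu.trans hpre).suffix_take_length
    omega
  · have hup : u <+: p :=
      (suffix_of_suffix_length_le hend hp_end hlt.le).isPrefix_of_reverse_eq hp.1.2 hu
    have hplen : p.length = k := by
      by_contra hne
      have := length_le_firstEnd hp.1.1
      exact hfirst _ (by omega) (by omega) (hp_end.suffix_take_sub_add hkw hup)
    rw [← hp_end.eq_of_length (by simp; omega)]
    exact hp.1.2

theorem exists_longest_proper_palindromic_suffix {w : List α} (hw : w ≠ []) :
    ∃ u, u <:+ w ∧ u.reverse = u ∧ u.length < w.length ∧
      ∀ v, v <:+ w → v.reverse = v → v.length < w.length → v.length ≤ u.length := by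
  have hfin : {v | v <:+ w ∧ v.reverse = v ∧ v.length < w.length}.Finite :=
    w.tails.finite_toSet.subset fun _ hv => (mem_tails _ _).mpr hv.1
  obtain ⟨u, ⟨hsuf, hu, hlt⟩, hmax⟩ :=
    Set.exists_max_image _ length hfin ⟨[], nil_suffix, rfl, length_pos_iff.mpr hw⟩
  exact ⟨u, hsuf, hu, hlt, fun v hsuf hv hlt => hmax v ⟨hsuf, hv, hlt⟩⟩

theorem occG_eq_two {u w : List α} (hpre : u <+: w) (hsuf : u <:+ w)
    (hlt : u.length < w.length) (hno : ∀ j, u.length < j → j < w.length → ¬ u <:+ w.take j) :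
    occG u w = 2 := by
  have hocc : {i | i + u.length ≤ w.length ∧ (w.drop i).take u.length = u} =
      {0, w.length - u.length} := by
    ext i
    simp only [Set.mem_ofPred_eq, Set.mem_insert_iff, Set.mem_singleton_iff]
    constructor
    · rintro ⟨hi, hocc⟩
      have hend : u <:+ w.take (i + u.length) := by
        rw [take_add, hocc]
        exact suffix_append _ u
      by_contra! hne
      exact hno _ (by omega) (by omega) hend
    · rintro (rfl | rfl)
      · exact ⟨by omega, (prefix_iff_eq_take.mp hpre).symm⟩
      · rw [← suffix_iff_eq_drop.mp hsuf]
        exact ⟨by omega, take_length⟩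
  rw [occG, hocc]
  exact Set.ncard_pair (by omega)

end

/-- Every rich palindrome is a closed word. -/
theorem rich_palindrome_closed {α : Type*} (w : List α)
    (hpal : w.reverse = w) (hrich : RichG w) : ClosedWordG w := by
  classical
  rcases eq_or_ne w [] with rfl | hw
  · exact Or.inl rfl
  obtain ⟨u, hsuf, hu, hlt, hmax⟩ := exists_longest_proper_palindromic_suffix hw
  have hpre := hsuf.isPrefix_of_reverse_eq hpal hu
  have hreturn : ∃ k, u.length < k ∧ k ≤ w.length ∧ u <:+ w.take k :=
    ⟨w.length, hlt, le_rfl, by simpa using hsuf⟩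
  set k := Nat.find hreturn
  obtain ⟨hk, hkw, hend⟩ : u.length < k ∧ k ≤ w.length ∧ u <:+ w.take k :=
    Nat.find_spec hreturn
  have hpal_take := hrich.reverse_take_eq_of_first_return hu hpre hk hkw hend
    fun j hj hjk hj_end => Nat.find_min hreturn hjk ⟨hj, by omega, hj_end⟩
  have hk_eq : k = w.length := by
    by_contra hne
    have := hmax _ ((take_prefix k w).isSuffix_of_reverse_eq hpal hpal_take) hpal_take
      (by simp; omega)
    simp only [length_take] at this
    omega
  refine Or.inr ⟨u, ne_of_apply_ne length hlt.ne, hpre, hsuf, occG_eq_two hpre hsuf hlt ?_⟩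
  exact fun j hj hjw hj_end => Nat.find_min hreturn (by omega) ⟨hj, hjw.le, hj_end⟩
end

section
/- Let w be a nonempty prefix of the Fibonacci infinite word (equivalently, a nonempty prefix of s_n for some n, where s_1 = a, s_2 = ab, and s_{n+1} = s_n·s_{n−1}). Then w is open if and only if there exists an index i ≥ 1 such that F_{i+1} − 1 ≤ |w| ≤ 2·F_i − 2. -/
open List

/-- The finite Fibonacci words: `s₁ = a`, `s₂ = ab`, `sₙ₊₁ = sₙ · sₙ₋₁`
(with `a = false`, `b = true`). -/
def fibWord : ℕ → Word
  | 0 => []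
  | 1 => [false]
  | 2 => [false, true]
  | n + 3 => fibWord (n + 2) ++ fibWord (n + 1)

/-!
The words `s_{k+1} s_k` and `s_k s_{k+1}` agree except for their last two letters, which are
swapped. Hence the Fibonacci word `f` has period `F_k` on its prefix of length `F_{k+2} - 2`, while
its letters at positions `F_{k+2} - 2` and `F_{k+1} - 2` differ. By induction on `k`, the prefix of length
`m ∈ [F_k - 1, F_{k+1} - 2]` then occurs at `0` and `F_k` and nowhere else before `F_{k+1}`.

A word is closed iff it is empty or has length `m + t`, where `t` is the first return time of its
prefix of length `m`. For prefixes of `f` this means `2 F_k - 1 ≤ |w| ≤ F_{k+2} - 2` for some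
`k ≥ 2`, and the open lengths are exactly the gaps between consecutive such intervals.
-/

section PrefixOccurrences

variable {α : Type*}

def PrefixOccursAt (x : ℕ → α) (m t : ℕ) : Prop := ∀ i < m, x (t + i) = x i

def IsFirstReturn (x : ℕ → α) (m t : ℕ) : Prop :=
  0 < t ∧ PrefixOccursAt x m t ∧ ∀ s, 0 < s → s < t → ¬ PrefixOccursAt x m s

lemma prefixOccursAt_zero (x : ℕ → α) (m : ℕ) : PrefixOccursAt x m 0 := by
  simp [PrefixOccursAt]

lemma PrefixOccursAt.mono {x : ℕ → α} {m m' t : ℕ} (ho : PrefixOccursAt x m t) (h : m' ≤ m) :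
    PrefixOccursAt x m' t :=
  fun i hi => ho i (by omega)

lemma drop_take_eq_take_iff_prefixOccursAt {w : List α} {x : ℕ → α}
    (hw : ∀ i (h : i < w.length), w[i] = x i) {m t : ℕ} (h : t + m ≤ w.length) :
    (w.drop t).take m = w.take m ↔ PrefixOccursAt x m t := by
  simp only [List.ext_getElem_iff, List.length_take, List.length_drop, List.getElem_take,
    List.getElem_drop, hw, PrefixOccursAt]
  constructor
  · rintro ⟨-, heq⟩ i hi
    exact heq i (by omega) (by omega)
  · intro heq
    exact ⟨by omega, fun i hi _ => heq i (by omega)⟩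

end PrefixOccurrences

lemma occ_take_eq_ncard {w : Word} {x : ℕ → Bool} (hw : ∀ i (h : i < w.length), w[i] = x i)
    {m : ℕ} (hm : m ≤ w.length) :
    occ (w.take m) w = {t | t + m ≤ w.length ∧ PrefixOccursAt x m t}.ncard := by
  rw [occ, List.length_take_of_le hm]
  congr 1
  ext t
  exact and_congr_right (drop_take_eq_take_iff_prefixOccursAt hw)

lemma closedWord_iff_exists_isFirstReturn {w : Word} {x : ℕ → Bool}
    (hw : ∀ i (h : i < w.length), w[i] = x i) :
    ClosedWord w ↔ w = [] ∨ ∃ m t, m + t = w.length ∧ IsFirstReturn x m t := by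
  refine or_congr_right ⟨?_, ?_⟩
  · rintro ⟨u, hne, hpre, hsuf, hocc⟩
    obtain ⟨m, rfl⟩ : ∃ m, u = w.take m := ⟨_, List.prefix_iff_eq_take.mp hpre⟩
    have hm : m < w.length := by
      by_contra! h
      exact hne (List.take_of_length_le h)
    set t := w.length - m
    have hocc_t : PrefixOccursAt x m t := by
      have hsuf := List.suffix_iff_eq_drop.mp hsuf
      rw [List.length_take_of_le hm.le] at hsuf
      rw [← drop_take_eq_take_iff_prefixOccursAt hw (by omega), ← hsuf, List.take_take, min_self]
    refine ⟨m, t, by omega, by omega, hocc_t, fun s hs hst hocc_s => ?_⟩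
    have hsub : ({0, s, t} : Set ℕ) ⊆ {r | r + m ≤ w.length ∧ PrefixOccursAt x m r} := by
      rintro r (rfl | rfl | rfl)
      exacts [⟨by omega, prefixOccursAt_zero x m⟩, ⟨by omega, hocc_s⟩, ⟨by omega, hocc_t⟩]
    have hfin : {r | r + m ≤ w.length ∧ PrefixOccursAt x m r}.Finite :=
      (Set.finite_Iic w.length).subset fun r hr => Set.mem_Iic.mpr (by have := hr.1; omega)
    have := Set.ncard_le_ncard hsub hfin
    rw [← occ_take_eq_ncard hw hm.le, hocc, Set.ncard_insert_of_notMem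
      (by simp only [Set.mem_insert_iff, Set.mem_singleton_iff, not_or]; omega),
      Set.ncard_pair (by omega)] at this
    omega
  · rintro ⟨m, t, hmt, ht, hocc_t, hfirst⟩
    have hdrop : w.drop t = w.take m := by
      rw [← drop_take_eq_take_iff_prefixOccursAt hw (by omega)] at hocc_t
      rwa [List.take_of_length_le (by rw [List.length_drop]; omega)] at hocc_t
    refine ⟨w.take m, fun h => ?_, List.take_prefix m _, hdrop ▸ List.drop_suffix t w, ?_⟩
    · have := congrArg List.length h
      rw [List.length_take_of_le (by omega)] at this
      omega
    · rw [occ_take_eq_ncard hw (by omega), ← Set.ncard_pair ht.ne]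
      congr 1
      ext s
      refine ⟨fun ⟨hs, hocc_s⟩ => ?_, ?_⟩
      · by_contra! h
        simp only [Set.mem_insert_iff, Set.mem_singleton_iff, not_or] at h
        exact hfirst s (by omega) (by omega) hocc_s
      · rintro (rfl | rfl)
        exacts [⟨by omega, prefixOccursAt_zero x m⟩, ⟨by omega, hocc_t⟩]

open Nat

lemma fibWord_prefix_succ : ∀ n, fibWord n <+: fibWord (n + 1)
  | 0 => List.nil_prefix
  | 1 => ⟨[true], rfl⟩
  | _ + 2 => List.prefix_append _ _

lemma fibWord_prefix_of_le {m n : ℕ} (h : m ≤ n) : fibWord m <+: fibWord n := by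
  induction h with
  | refl => exact List.prefix_refl _
  | step _ ih => exact ih.trans (fibWord_prefix_succ _)

lemma length_fibWord : ∀ n, (fibWord (n + 1)).length = fib (n + 2)
  | 0 => rfl
  | 1 => rfl
  | n + 2 => by
    rw [fibWord, List.length_append, length_fibWord (n + 1), length_fibWord n,
      fib_add_two (n := n + 2)]
    ring

-- The default letter is never used: `(fibWord (i + 1)).length = fib (i + 2) > i`.
def fibInf (i : ℕ) : Bool := (fibWord (i + 1)).getD i false

lemma getElem_eq_fibInf_of_prefix {w : Word} {n i : ℕ} (hw : w <+: fibWord n) (hi : i < w.length) :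
    w[i] = fibInf i := by
  have hi' : i < (fibWord (i + 1)).length := by
    have := le_fib_add_one (i + 2)
    rw [length_fibWord]; omega
  rw [fibInf, List.getD_eq_getElem _ _ hi',
    (hw.trans (fibWord_prefix_of_le (le_max_left n (i + 1)))).getElem hi,
    (fibWord_prefix_of_le (le_max_right n (i + 1))).getElem hi']

lemma fibWord_append_swap : ∀ k, ∃ (t : Word) (c : Bool),
    fibWord (k + 2) ++ fibWord (k + 1) = t ++ [c, !c] ∧
      fibWord (k + 1) ++ fibWord (k + 2) = t ++ [!c, c]
  | 0 => ⟨[false], true, rfl, rfl⟩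
  | k + 1 => by
    obtain ⟨t, c, h, h'⟩ := fibWord_append_swap k
    refine ⟨fibWord (k + 2) ++ t, !c, ?_, ?_⟩
    · rw [fibWord, List.append_assoc, h', Bool.not_not, List.append_assoc]
    · rw [fibWord, h, Bool.not_not, List.append_assoc]

lemma fibInf_fib_add {k i : ℕ} (h : i + 2 < fib (k + 1)) : fibInf (fib k + i) = fibInf i := by
  obtain ⟨j, rfl⟩ : ∃ j, k = j + 3 := by
    refine ⟨k - 3, (Nat.sub_add_cancel ?_).symm⟩
    by_contra! hk
    interval_cases k <;> simp [fib_add_two] at h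
  change i + 2 < fib (j + 4) at h
  -- `fibWord (j + 4) = A B A` with `A = fibWord (j + 2)`, `B = fibWord (j + 1)` begins both with
  -- `A B = t c c̄` and with `A (B A) = A t c̄ c`.
  obtain ⟨t, c, hsw, hsw'⟩ := fibWord_append_swap j
  have h3 : fibWord (j + 3) = t ++ [c, !c] := hsw
  have h4 : fibWord (j + 4) = fibWord (j + 2) ++ t ++ [!c, c] := by
    rw [List.append_assoc, ← hsw']
    exact List.append_assoc _ _ _
  have hA : (fibWord (j + 2)).length = fib (j + 3) := length_fibWord (j + 1)
  have ht : t.length + 2 = fib (j + 4) := by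
    simpa [length_fibWord] using congrArg List.length h3.symm
  calc fibInf (fib (j + 3) + i)
      = (fibWord (j + 2) ++ t)[fib (j + 3) + i]'(by rw [List.length_append]; omega) :=
        (getElem_eq_fibInf_of_prefix ⟨[!c, c], h4.symm⟩ _).symm
    _ = t[i] := by simp [List.getElem_append_right, hA]
    _ = fibInf i := getElem_eq_fibInf_of_prefix ⟨[c, !c], h3.symm⟩ (by omega)

lemma fibInf_fib_sub_two_ne {k : ℕ} (hk : 2 ≤ k) :
    fibInf (fib (k + 2) - 2) ≠ fibInf (fib (k + 1) - 2) := by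
  obtain ⟨j, rfl⟩ : ∃ j, k = j + 2 := ⟨k - 2, by omega⟩
  change fibInf (fib (j + 4) - 2) ≠ fibInf (fib (j + 3) - 2)
  obtain ⟨t, c, hsw, hsw'⟩ := fibWord_append_swap j
  have h3 : fibWord (j + 3) = t ++ [c, !c] := hsw
  have ht : t.length + 2 = fib (j + 4) := by
    simpa [length_fibWord] using congrArg List.length h3.symm
  have hfib : fib (j + 4) = fib (j + 2) + fib (j + 3) := fib_add_two
  have hB : (fibWord (j + 1)).length = fib (j + 2) := length_fibWord j
  have hA : (fibWord (j + 2)).length = fib (j + 3) := length_fibWord (j + 1)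
  have h2 : 2 ≤ fib (j + 3) := fib_mono (a := 3) (by omega)
  -- `fibWord (j + 3)` ends with `c c̄` and `fibWord (j + 2)` with `c̄ c`.
  have hc : fibInf (fib (j + 4) - 2) = c := by
    rw [← getElem_eq_fibInf_of_prefix (List.prefix_refl (fibWord (j + 3)))
      (by rw [h3, List.length_append]; simp only [List.length_cons, List.length_nil]; omega),
      List.getElem_of_eq h3]
    simp [List.getElem_append_right, ← ht]
  have hc' : fibInf (fib (j + 3) - 2) = !c := by
    rw [← getElem_eq_fibInf_of_prefix (List.prefix_refl (fibWord (j + 2))) (by omega)]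
    have := List.getElem_of_eq hsw' (i := t.length) (by rw [List.length_append]; omega)
    rw [List.getElem_append_right (by omega)] at this
    simpa [hB, show t.length - fib (j + 2) = fib (j + 3) - 2 by omega] using this
  simp [hc, hc']

lemma eq_fib_of_prefixOccursAt {k t : ℕ} (hk : 2 ≤ k) (ht : 0 < t) (htk : t < fib (k + 1))
    (ho : PrefixOccursAt fibInf (fib k - 1) t) : t = fib k := by
  induction k, hk using Nat.le_induction generalizing t with
  | base =>
    have : fib (2 + 1) = 2 := rfl
    have : fib 2 = 1 := rfl
    omega
  | succ k hk ih =>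
    change t < fib (k + 2) at htk
    have hf : fib (k + 2) = fib k + fib (k + 1) := fib_add_two
    have hmono : fib k ≤ fib (k + 1) := fib_le_fib_succ
    rcases lt_or_ge t (fib (k + 1)) with hlt | hge
    · obtain rfl := ih ht hlt (ho.mono (by omega))
      have hmismatch := ho (fib (k + 1) - 2) (by omega)
      rw [show fib k + (fib (k + 1) - 2) = fib (k + 2) - 2 by omega] at hmismatch
      exact (fibInf_fib_sub_two_ne hk hmismatch).elim
    · have hshift : PrefixOccursAt fibInf (fib k - 1) (t - fib (k + 1)) := fun i hi => by
        rw [← ho i (by omega),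
          ← fibInf_fib_add (k := k + 1) (i := t - fib (k + 1) + i)
            (by change _ < fib (k + 2); omega)]
        congr 1
        omega
      rcases (t - fib (k + 1)).eq_zero_or_pos with h0 | h0
      · omega
      · have := ih h0 (by omega) hshift
        omega

lemma prefixOccursAt_fib {k m : ℕ} (hm : m + 2 ≤ fib (k + 1)) :
    PrefixOccursAt fibInf m (fib k) :=
  fun i hi => fibInf_fib_add (by omega)

lemma isFirstReturn_fibInf_iff {k m t : ℕ} (hk : 2 ≤ k) (hkm : fib k ≤ m + 1)
    (hmk : m + 2 ≤ fib (k + 1)) : IsFirstReturn fibInf m t ↔ t = fib k := by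
  have hpos : 0 < fib k := fib_pos.mpr (by omega)
  constructor
  · rintro ⟨ht, ho, hfirst⟩
    by_contra hne
    rcases lt_or_ge t (fib (k + 1)) with h | h
    · exact hne (eq_fib_of_prefixOccursAt hk ht h (ho.mono (by omega)))
    · exact hfirst (fib k) hpos (by omega) (prefixOccursAt_fib hmk)
  · rintro rfl
    exact ⟨hpos, prefixOccursAt_fib hmk, fun s hs hsk hos =>
      (eq_fib_of_prefixOccursAt hk hs (by omega) (hos.mono (by omega))).not_lt hsk⟩

lemma closedWord_iff_of_prefix_fibWord {w : Word} {n : ℕ} (hw : w <+: fibWord n) :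
    ClosedWord w ↔
      w = [] ∨ ∃ k, 2 ≤ k ∧ 2 * fib k ≤ w.length + 1 ∧ w.length + 2 ≤ fib (k + 2) := by
  rw [closedWord_iff_exists_isFirstReturn fun i hi => getElem_eq_fibInf_of_prefix hw hi]
  refine or_congr_right ⟨?_, ?_⟩
  · rintro ⟨m, t, hmt, hret⟩
    set k := greatestFib (m + 1)
    have hk : 2 ≤ k := le_greatestFib.mpr (by simp)
    have hkm : fib k ≤ m + 1 := fib_greatestFib_le _
    have hmk : m + 1 < fib (k + 1) := lt_fib_greatestFib_add_one _
    obtain rfl := (isFirstReturn_fibInf_iff hk hkm hmk).mp hret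
    have : fib (k + 2) = fib k + fib (k + 1) := fib_add_two
    exact ⟨k, hk, by omega, by omega⟩
  · rintro ⟨k, hk, hlo, hhi⟩
    have : fib (k + 2) = fib k + fib (k + 1) := fib_add_two
    exact ⟨w.length - fib k, fib k, by omega,
      (isFirstReturn_fibInf_iff hk (by omega) (by omega)).mpr rfl⟩

lemma exists_fib_succ_le_le_two_mul_fib_iff {N : ℕ} (hN : 1 ≤ N) :
    (∃ i, 1 ≤ i ∧ fib (i + 1) - 1 ≤ N ∧ N ≤ 2 * fib i - 2) ↔
      ¬ ∃ k, 2 ≤ k ∧ 2 * fib k ≤ N + 1 ∧ N + 2 ≤ fib (k + 2) := by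
  constructor
  · rintro ⟨i, hi, hlo, hhi⟩ ⟨k, hk, hlo', hhi'⟩
    rcases le_or_gt i k with hik | hik
    · have := fib_mono hik
      omega
    · have := fib_mono (show k + 2 ≤ i + 1 by omega)
      omega
  · intro hclosed
    have hj : 3 ≤ greatestFib (N + 1) := le_greatestFib.mpr (by change 2 ≤ N + 1; omega)
    have hlo := fib_greatestFib_le (N + 1)
    have hhi := lt_fib_greatestFib_add_one (N + 1)
    obtain ⟨i, hi⟩ : ∃ i, greatestFib (N + 1) = i + 1 := ⟨_, (Nat.sub_add_cancel (by omega)).symm⟩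
    rw [hi] at hj hlo hhi
    change N + 1 < fib (i + 2) at hhi
    refine ⟨i, by omega, by omega, ?_⟩
    by_contra! h
    exact hclosed ⟨i, by omega, by omega, by omega⟩

/-- A nonempty prefix `w` of the Fibonacci infinite word is open if and only if
`F_{i+1} - 1 ≤ |w| ≤ 2F_i - 2` for some `i ≥ 1`. -/
theorem fibonacci_prefix_open_iff (w : Word) (hne : w ≠ [])
    (hpre : ∃ n : ℕ, 1 ≤ n ∧ w <+: fibWord n) :
    ¬ ClosedWord w ↔
      ∃ i : ℕ, 1 ≤ i ∧ Nat.fib (i + 1) - 1 ≤ w.length ∧ w.length ≤ 2 * Nat.fib i - 2 := by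
  obtain ⟨n, -, hw⟩ := hpre
  rw [closedWord_iff_of_prefix_fibWord hw, or_iff_right hne,
    exists_fib_succ_le_le_two_mul_fib_iff (List.length_pos_iff.mpr hne)]
end
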